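/- Let K be an invertible n×n real matrix, Σ an invertible r×r real matrix, and G₀ an n×v₀ real matrix such that G₀ᵀK⁻¹G₀ is invertible. Then the generalized least squares estimator matrix for the parallel partial emulator mean structure simplifies so as not to involve Σ: [(G₀ ⊗ I_r)ᵀ (K⁻¹ ⊗ Σ⁻¹) (G₀ ⊗ I_r)]⁻¹ (G₀ ⊗ I_r)ᵀ (K⁻¹ ⊗ Σ⁻¹) = [(G₀ᵀK⁻¹G₀)⁻¹G₀ᵀK⁻¹] ⊗ I_r, where I_r is the r×r identity matrix. -/
import Mathlib


open Matrix Kronecker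

/-- The generalized least squares estimator matrix for the parallel partial
emulator mean structure (design matrix `G₀ ⊗ I_r`, covariance `K ⊗ Σ`)
simplifies so as not to involve the coregionalization matrix `Σ`. -/
theorem ppe_gls_independent_of_coregionalization
    (n r v₀ : ℕ)
    (K : Matrix (Fin n) (Fin n) ℝ) (Sig : Matrix (Fin r) (Fin r) ℝ)
    (G₀ : Matrix (Fin n) (Fin v₀) ℝ)
    (hK : IsUnit K.det) (hSig : IsUnit Sig.det)
    (hG : IsUnit (G₀ᵀ * K⁻¹ * G₀).det) :
    ((G₀ ⊗ₖ (1 : Matrix (Fin r) (Fin r) ℝ))ᵀ * (K⁻¹ ⊗ₖ Sig⁻¹) *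
        (G₀ ⊗ₖ (1 : Matrix (Fin r) (Fin r) ℝ)))⁻¹ *
      (G₀ ⊗ₖ (1 : Matrix (Fin r) (Fin r) ℝ))ᵀ * (K⁻¹ ⊗ₖ Sig⁻¹) =
    ((G₀ᵀ * K⁻¹ * G₀)⁻¹ * G₀ᵀ * K⁻¹) ⊗ₖ (1 : Matrix (Fin r) (Fin r) ℝ) := by
  have ht : (G₀ ⊗ₖ (1 : Matrix (Fin r) (Fin r) ℝ))ᵀ = G₀ᵀ ⊗ₖ (1 : Matrix (Fin r) (Fin r) ℝ) := by
    rw [← Matrix.kroneckerMap_transpose, Matrix.transpose_one]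
  rw [ht, ← Matrix.mul_kronecker_mul, ← Matrix.mul_kronecker_mul, Matrix.one_mul,
    Matrix.mul_one, Matrix.inv_kronecker, Matrix.nonsing_inv_nonsing_inv _ hSig,
    ← Matrix.mul_kronecker_mul, ← Matrix.mul_kronecker_mul,
    Matrix.mul_one, Matrix.mul_nonsing_inv _ hSig, Matrix.mul_assoc]
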